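/- Let f : X → X be a continuous map of a compact metric space and Λ a closed f-invariant subset such that the interior of Λ is nonempty, f|_Λ is chain transitive, and f has shadowing on B_b(Λ) for some b > 0. Then Λ is a terminal chain component of f (i.e., Λ is a chain component and is chain stable). -/

import Mathlib

/-! Pick `p` with `ball p r ⊆ Λ`. By induction on the length, a fine chain starting at `p` is
shadowed by an orbit starting within `r` of `p`, hence by an orbit lying in `Λ`: if the chain up to
time `n` is shadowed by an orbit in `Λ`, uniform continuity keeps its next point in `B_b(Λ)`, so
shadowing applies to the chain up to time `n + 1`, and the shadowing point again lies in `ball p r`.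
Thus everything chain-reachable from `p` lies in the closed set `Λ`; by chain transitivity this holds
for everything chain-reachable from `Λ`, which makes `Λ` a chain stable chain component. -/

open Metric Filter Topology Set

variable {X : Type*}

/-- `(c i)_{i=0}^k` is a `δ`-chain of `f` (up to index `k`). -/
def IsDeltaChain [MetricSpace X] (f : X → X) (δ : ℝ) (k : ℕ) (c : ℕ → X) : Prop :=
  ∀ i < k, dist (f (c i)) (c (i + 1)) ≤ δ

/-- `x → y` : for every `δ > 0` there is a `δ`-chain from `x` to `y`. -/
def ChainReach [MetricSpace X] (f : X → X) (x y : X) : Prop :=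
  ∀ δ > 0, ∃ k ≥ 1, ∃ c : ℕ → X, c 0 = x ∧ c k = y ∧ IsDeltaChain f δ k c

/-- The chain recurrent set. -/
def ChainRec [MetricSpace X] (f : X → X) : Set X := {x | ChainReach f x x}

/-- `C` is a chain component of `f`. -/
def IsChainComponent [MetricSpace X] (f : X → X) (C : Set X) : Prop :=
  ∃ x, ChainReach f x x ∧
    C = {y | ChainReach f y y ∧ ChainReach f x y ∧ ChainReach f y x}

/-- A set is chain stable iff points chain-reachable from it stay in it. -/
def ChainStable [MetricSpace X] (f : X → X) (S : Set X) : Prop :=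
  ∀ x ∈ S, ∀ y, ChainReach f x y → y ∈ S

/-- `S` is "initially stable": if `y → x` with `x ∈ S` then `y ∈ S`. -/
def InitialStable [MetricSpace X] (f : X → X) (S : Set X) : Prop :=
  ∀ x ∈ S, ∀ y, ChainReach f y x → y ∈ S

/-- `f` restricted to `Λ` is chain transitive. -/
def ChainTransitiveOn [MetricSpace X] (f : X → X) (Λ : Set X) : Prop :=
  ∀ p ∈ Λ, ∀ q ∈ Λ, ∀ δ > 0, ∃ k ≥ 1, ∃ c : ℕ → X,
    c 0 = p ∧ c k = q ∧ (∀ i ≤ k, c i ∈ Λ) ∧ IsDeltaChain f δ k c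

/-- `f` has shadowing on `S`. -/
def ShadowsOn [MetricSpace X] (f : X → X) (S : Set X) : Prop :=
  ∀ ε > 0, ∃ δ > 0, ∀ (k : ℕ) (c : ℕ → X), (∀ i ≤ k, c i ∈ S) →
    IsDeltaChain f δ k c → ∃ x, ∀ i ≤ k, dist (c i) (f^[i] x) ≤ ε

/-- Iterate of a homeomorphism indexed by `ℤ`. -/
def hIter [TopologicalSpace X] (f : X ≃ₜ X) (i : ℤ) : X → X :=
  if 0 ≤ i then (⇑f)^[i.toNat] else (⇑f.symm)^[(-i).toNat]

/-- A `δ`-limit-pseudo orbit of the homeomorphism `f`. -/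
def IsLimitPseudoOrbit [MetricSpace X] (f : X ≃ₜ X) (δ : ℝ) (ξ : ℤ → X) : Prop :=
  (∀ i : ℤ, dist (f (ξ i)) (ξ (i + 1)) ≤ δ) ∧
  Tendsto (fun i : ℤ => dist (f (ξ i)) (ξ (i + 1))) atBot (nhds 0) ∧
  Tendsto (fun i : ℤ => dist (f (ξ i)) (ξ (i + 1))) atTop (nhds 0)

/-- `f` has L-shadowing on `S`. -/
def LShadowsOn [MetricSpace X] (f : X ≃ₜ X) (S : Set X) : Prop :=
  ∀ ε > 0, ∃ δ > 0, ∀ ξ : ℤ → X, (∀ i : ℤ, ξ i ∈ S) →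
    IsLimitPseudoOrbit f δ ξ →
    ∃ x : X, (∀ i : ℤ, dist (ξ i) (hIter f i x) ≤ ε) ∧
      Tendsto (fun i : ℤ => dist (ξ i) (hIter f i x)) atBot (nhds 0) ∧
      Tendsto (fun i : ℤ => dist (ξ i) (hIter f i x)) atTop (nhds 0)

/-- `f` is expansive on `S`. -/
def ExpansiveOn [MetricSpace X] (f : X ≃ₜ X) (S : Set X) : Prop :=
  ∃ e > 0, ∀ x y : X, (∀ i : ℤ, hIter f i x ∈ S) → (∀ i : ℤ, hIter f i y ∈ S) →
    (∀ i : ℤ, dist (hIter f i x) (hIter f i y) ≤ e) → x = y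

/-- Closed `b`-neighborhood of `S`. -/
def Nbhd [MetricSpace X] (b : ℝ) (S : Set X) : Set X := {x | Metric.infDist x S ≤ b}

/-- Attractor for a continuous map `f`. -/
def IsAttractor [TopologicalSpace X] (f : X → X) (Λ : Set X) : Prop :=
  IsClosed Λ ∧ f '' Λ = Λ ∧
    ∃ U : Set X, IsOpen U ∧ f '' closure U ⊆ U ∧ Λ = ⋂ i : ℕ, f^[i] '' U

/-- `f` is (topologically) mixing. -/
def IsMixing [TopologicalSpace X] (f : X → X) : Prop :=
  ∀ U V : Set X, IsOpen U → IsOpen V → U.Nonempty → V.Nonempty →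
    ∃ j : ℕ, ∀ i ≥ j, (f^[i] '' U ∩ V).Nonempty

/-- The ω-limit set of `x` under `f`. -/
def OmegaSet [TopologicalSpace X] (f : X → X) (x : X) : Set X :=
  {y | ∃ φ : ℕ → ℕ, StrictMono φ ∧ Tendsto (fun j => f^[φ j] x) atTop (nhds y)}

/-- `M` is a minimal set for `f`. -/
def IsMinimalSet [TopologicalSpace X] (f : X → X) (M : Set X) : Prop :=
  M.Nonempty ∧ IsClosed M ∧ f '' M ⊆ M ∧ ∀ x ∈ M, OmegaSet f x = M

section Chains

variable [MetricSpace X] {f : X → X}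

theorem IsDeltaChain.append {δ : ℝ} {m k : ℕ} {c d : ℕ → X} (hc : IsDeltaChain f δ m c)
    (hd : IsDeltaChain f δ k d) (hcd : c m = d 0) :
    IsDeltaChain f δ (m + k) (fun i => if i ≤ m then c i else d (i - m)) := by
  intro i hi
  rcases lt_or_ge i m with him | him
  · simpa [him.le, Nat.succ_le_of_lt him] using hc i him
  · have hcur : (if i ≤ m then c i else d (i - m)) = d (i - m) := by
      split_ifs with h
      · rw [le_antisymm h him, hcd, Nat.sub_self]
      · rfl
    have hnext : i + 1 - m = i - m + 1 := by omega
    simpa [hcur, show ¬i + 1 ≤ m by omega, hnext] using hd (i - m) (by omega)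

theorem ChainReach.trans {x y z : X} (hxy : ChainReach f x y) (hyz : ChainReach f y z) :
    ChainReach f x z := by
  intro δ hδ
  obtain ⟨m, hm, c, hc0, hcm, hc⟩ := hxy δ hδ
  obtain ⟨k, hk, d, hd0, hdk, hd⟩ := hyz δ hδ
  refine ⟨m + k, by omega, _, by simp [hc0], ?_, hc.append hd (hcm.trans hd0.symm)⟩
  simp [show ¬m + k ≤ m by omega, hdk]

theorem ChainTransitiveOn.chainReach {Λ : Set X} (hct : ChainTransitiveOn f Λ) {p q : X}
    (hp : p ∈ Λ) (hq : q ∈ Λ) : ChainReach f p q := by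
  intro δ hδ
  obtain ⟨k, hk, c, hc0, hck, -, hc⟩ := hct p hp q hq δ hδ
  exact ⟨k, hk, c, hc0, hck, hc⟩

theorem ChainTransitiveOn.isChainComponent {Λ : Set X} (hct : ChainTransitiveOn f Λ)
    (hstable : ChainStable f Λ) {p : X} (hp : p ∈ Λ) : IsChainComponent f Λ := by
  refine ⟨p, hct.chainReach hp hp, Set.ext fun y => ⟨fun hy => ?_, fun hy => ?_⟩⟩
  · exact ⟨hct.chainReach hy hy, hct.chainReach hp hy, hct.chainReach hy hp⟩
  · exact hstable p hp y hy.2.1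

end Chains

section Shadowing

variable [MetricSpace X] {f : X → X} {Λ : Set X} {b r ε δ : ℝ} {p : X}

theorem mem_nbhd_of_dist_le {x y : X} (hy : y ∈ Λ) (h : dist x y ≤ b) : x ∈ Nbhd b Λ :=
  (infDist_le_dist_of_mem hy).trans h

theorem exists_mem_shadowing_orbit_of_isDeltaChain (hinv : MapsTo f Λ Λ)
    (hball : ball p r ⊆ Λ) (hε : 0 ≤ ε) (hεr : ε < r) (hεb : ε ≤ b) (hδb : δ ≤ b / 2)
    (hfε : ∀ x y, dist x y ≤ ε → dist (f x) (f y) ≤ b / 2)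
    (hsh : ∀ (k : ℕ) (c : ℕ → X), (∀ i ≤ k, c i ∈ Nbhd b Λ) →
      IsDeltaChain f δ k c → ∃ x, ∀ i ≤ k, dist (c i) (f^[i] x) ≤ ε)
    {k : ℕ} {c : ℕ → X} (hc0 : c 0 = p) (hc : IsDeltaChain f δ k c) :
    ∃ z ∈ Λ, ∀ j ≤ k, dist (c j) (f^[j] z) ≤ ε := by
  suffices ∀ n ≤ k, ∃ z ∈ Λ, ∀ j ≤ n, dist (c j) (f^[j] z) ≤ ε from this k le_rfl
  intro n
  induction n with
  | zero =>
    refine fun _ => ⟨p, hball (mem_ball_self (hε.trans_lt hεr)), fun j hj => ?_⟩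
    simpa [Nat.le_zero.mp hj, hc0] using hε
  | succ n ih =>
    intro hn
    obtain ⟨z, hz, hzc⟩ := ih (by omega)
    have hnext : dist (c (n + 1)) (f^[n + 1] z) ≤ b := by
      rw [Function.iterate_succ_apply']
      calc dist (c (n + 1)) (f (f^[n] z))
          ≤ dist (f (c n)) (c (n + 1)) + dist (f (c n)) (f (f^[n] z)) := dist_triangle_left _ _ _
        _ ≤ b / 2 + b / 2 := add_le_add ((hc n (by omega)).trans hδb) (hfε _ _ (hzc n le_rfl))
        _ = b := add_halves b
    have hnbhd : ∀ j ≤ n + 1, c j ∈ Nbhd b Λ := by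
      intro j hj
      refine mem_nbhd_of_dist_le (hinv.iterate j hz) ?_
      rcases (show j ≤ n ∨ j = n + 1 by omega) with hj | rfl
      · exact (hzc j hj).trans hεb
      · exact hnext
    obtain ⟨z', hz'⟩ := hsh (n + 1) c hnbhd fun i hi => hc i (by omega)
    have hz'p : dist p z' ≤ ε := by simpa [hc0] using hz' 0 (Nat.zero_le _)
    exact ⟨z', hball (mem_ball'.mpr (hz'p.trans_lt hεr)), hz'⟩

theorem ShadowsOn.exists_mem_shadowing_orbit_of_ball_subset (hsh : ShadowsOn f (Nbhd b Λ))
    (hb : 0 < b) (hf : UniformContinuous f) (hinv : MapsTo f Λ Λ) (hr : 0 < r)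
    (hball : ball p r ⊆ Λ) (hε : 0 < ε) :
    ∃ δ > 0, ∀ (k : ℕ) (c : ℕ → X), c 0 = p → IsDeltaChain f δ k c →
      ∃ z ∈ Λ, ∀ j ≤ k, dist (c j) (f^[j] z) ≤ ε := by
  obtain ⟨η, hη, hfη⟩ := Metric.uniformContinuous_iff.mp hf (b / 2) (half_pos hb)
  obtain ⟨ε', hε'pos, hε'ε, hε'b, hε'r, hε'η⟩ : ∃ ε' > 0, ε' ≤ ε ∧ ε' ≤ b ∧ ε' < r ∧ ε' < η :=
    ⟨min (min ε b) (min r η) / 2, by positivity, by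
      refine ⟨?_, ?_, ?_, ?_⟩ <;>
        linarith [min_le_left (min ε b) (min r η), min_le_right (min ε b) (min r η),
          min_le_left ε b, min_le_right ε b, min_le_left r η, min_le_right r η]⟩
  obtain ⟨δ, hδ, hshδ⟩ := hsh ε' hε'pos
  refine ⟨min δ (b / 2), lt_min hδ (half_pos hb), fun k c hc0 hc => ?_⟩
  obtain ⟨z, hz, hzc⟩ := exists_mem_shadowing_orbit_of_isDeltaChain hinv hball
    hε'pos.le hε'r hε'b (min_le_right _ _) (fun x y hxy => (hfη (hxy.trans_lt hε'η)).le)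
    (fun k c hcS hc => hshδ k c hcS fun i hi => (hc i hi).trans (min_le_left _ _)) hc0 hc
  exact ⟨z, hz, fun j hj => (hzc j hj).trans hε'ε⟩

theorem mem_of_chainReach_of_ball_subset (hsh : ShadowsOn f (Nbhd b Λ)) (hb : 0 < b)
    (hf : UniformContinuous f) (hΛc : IsClosed Λ) (hinv : MapsTo f Λ Λ) (hr : 0 < r)
    (hball : ball p r ⊆ Λ) {y : X} (hpy : ChainReach f p y) : y ∈ Λ := by
  refine hΛc.closure_subset (Metric.mem_closure_iff.mpr fun ε hε => ?_)
  obtain ⟨δ, hδ, hδsh⟩ := hsh.exists_mem_shadowing_orbit_of_ball_subset hb hf hinv hr hball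
    (half_pos hε)
  obtain ⟨k, -, c, hc0, hck, hc⟩ := hpy δ hδ
  obtain ⟨z, hz, hzc⟩ := hδsh k c hc0 hc
  exact ⟨f^[k] z, hinv.iterate k hz, hck ▸ (hzc k le_rfl).trans_lt (half_lt_self hε)⟩

end Shadowing

theorem stmt6 [MetricSpace X] [CompactSpace X] (f : X → X) (hf : Continuous f)
    (Λ : Set X) (hΛc : IsClosed Λ) (hΛinv : f '' Λ ⊆ Λ)
    (hint : (interior Λ).Nonempty) (hct : ChainTransitiveOn f Λ)
    (b : ℝ) (hb : 0 < b) (hsh : ShadowsOn f (Nbhd b Λ)) :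
    IsChainComponent f Λ ∧ ChainStable f Λ := by
  obtain ⟨p, hp⟩ := hint
  obtain ⟨r, hr, hball⟩ := Metric.isOpen_iff.mp isOpen_interior p hp
  have hpΛ : p ∈ Λ := interior_subset hp
  have hstable : ChainStable f Λ := fun x hx y hxy =>
    mem_of_chainReach_of_ball_subset hsh hb (CompactSpace.uniformContinuous_of_continuous hf) hΛc
      (mapsTo_iff_image_subset.mpr hΛinv) hr (hball.trans interior_subset)
      ((hct.chainReach hpΛ hx).trans hxy)
  exact ⟨hct.isChainComponent hstable hpΛ, hstable⟩
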